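/- Let Σ ⊆ ℝ^(n+k) and let C be the set of limits lim √tᵢ xᵢ with tᵢ → 0⁺ and xᵢ ∈ Σ. Suppose there is C₀ > 0 such that for all t₁ > t₂ > 0, the Hausdorff distance satisfies dist_H(√t₁ Σ, √t₂ Σ) ≤ C₀ √(t₁ − t₂). Then for every x ∈ Σ and every t > 0 there exists y ∈ C with |√t x − y| ≤ C₀ √(3t). -/

import Mathlib

open Filter Topology
open scoped Pointwise

/-!
Rescale `x` along the times `τᵢ = t / 16ⁱ`. The Hausdorff bound lets one move from a point of
`√τᵢ Σ` to a point of `√τᵢ₊₁ Σ` at cost (barely more than) `C₀ √(τᵢ - τᵢ₊₁) = C₀ √(15t) / 4ⁱ⁺¹`.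
These costs are geometric, so the resulting chain is Cauchy; its limit lies in the cone, at
distance at most `C₀ √(15t) / 3 < C₀ √(3t)` from `√t x`. The strict gap absorbs the slack needed
because the Hausdorff distance need not be attained.
-/

section Chain

variable {α : Type*} [PseudoMetricSpace α]

theorem exists_seq_mem_dist_succ_le {T : ℕ → Set α} {b : ℕ → ℝ}
    (h : ∀ i, ∀ p ∈ T i, ∃ q ∈ T (i + 1), dist p q ≤ b i) {p : α} (hp : p ∈ T 0) :
    ∃ f : ℕ → α, f 0 = p ∧ (∀ i, f i ∈ T i) ∧ ∀ i, dist (f i) (f (i + 1)) ≤ b i := by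
  choose! next hnext_mem hnext_dist using h
  let f : ℕ → α := fun i => Nat.rec p next i
  have hf : ∀ i, f i ∈ T i := by
    intro i
    induction i with
    | zero => exact hp
    | succ i ih => exact hnext_mem i (f i) ih
  exact ⟨f, rfl, hf, fun i => hnext_dist i (f i) (hf i)⟩

theorem exists_mem_dist_lt_of_hausdorffEDist_le {s t : Set α} {p : α} (hp : p ∈ s) {r ε : ℝ}
    (hr : 0 ≤ r) (hε : 0 < ε) (h : Metric.hausdorffEDist s t ≤ ENNReal.ofReal r) :
    ∃ q ∈ t, dist p q < r + ε := by
  have hlt : Metric.hausdorffEDist s t < ENNReal.ofReal (r + ε) :=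
    h.trans_lt ((ENNReal.ofReal_lt_ofReal_iff (by linarith)).mpr (by linarith))
  obtain ⟨q, hq, hpq⟩ := Metric.exists_edist_lt_of_hausdorffEDist_lt hp hlt
  exact ⟨q, hq, edist_lt_ofReal.mp hpq⟩

theorem exists_seq_mem_tendsto_dist_le_of_hausdorffEDist_le [CompleteSpace α]
    {T : ℕ → Set α} {d : ℕ → ℝ} (hd_nonneg : ∀ i, 0 ≤ d i) (hd : Summable d)
    (hT : ∀ i, Metric.hausdorffEDist (T i) (T (i + 1)) ≤ ENNReal.ofReal (d i))
    {p : α} (hp : p ∈ T 0) {ε : ℝ} (hε : 0 < ε) :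
    ∃ f : ℕ → α, (∀ i, f i ∈ T i) ∧ ∃ y, Tendsto f atTop (𝓝 y) ∧ dist p y ≤ ∑' i, d i + ε := by
  set b : ℕ → ℝ := fun i => d i + ε / 2 / 2 ^ i
  have hb : Summable b := hd.add (summable_geometric_two' ε)
  have hb_tsum : ∑' i, b i = ∑' i, d i + ε := by
    rw [hd.tsum_add (summable_geometric_two' ε), tsum_geometric_two']
  obtain ⟨f, hf0, hf_mem, hf_dist⟩ := exists_seq_mem_dist_succ_le (b := b)
    (fun i q hq => (exists_mem_dist_lt_of_hausdorffEDist_le hq (hd_nonneg i)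
      (by positivity) (hT i)).imp fun _ ⟨hmem, hdist⟩ => ⟨hmem, hdist.le⟩) hp
  have hf_cauchy : CauchySeq f :=
    cauchySeq_of_summable_dist (hb.of_nonneg_of_le (fun _ => dist_nonneg) hf_dist)
  obtain ⟨y, hy⟩ := cauchySeq_tendsto_of_complete hf_cauchy
  refine ⟨f, hf_mem, y, hy, ?_⟩
  rw [← hf0, ← hb_tsum]
  exact dist_le_tsum_of_dist_le_of_tendsto₀ b hf_dist hb hy

end Chain

theorem sqrt_sub_mul_sixteenth_pow (t : ℝ) (i : ℕ) :
    Real.sqrt (t * (1 / 16) ^ i - t * (1 / 16) ^ (i + 1)) =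
      Real.sqrt (15 * t) / 4 * (1 / 4) ^ i := by
  have h16 : (1 / 16 : ℝ) ^ i = ((1 / 4) ^ i) ^ 2 := by
    rw [← pow_mul, mul_comm, pow_mul]
    norm_num
  have h : t * (1 / 16) ^ i - t * (1 / 16) ^ (i + 1) = 15 * t * ((1 / 4) ^ i / 4) ^ 2 := by
    rw [pow_succ, h16]
    ring
  rw [h, Real.sqrt_mul' _ (sq_nonneg _), Real.sqrt_sq (by positivity)]
  ring

theorem tsum_sqrt_sub_mul_sixteenth_pow (t : ℝ) :
    ∑' i : ℕ, Real.sqrt (t * (1 / 16) ^ i - t * (1 / 16) ^ (i + 1)) = Real.sqrt (15 * t) / 3 := by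
  simp_rw [sqrt_sub_mul_sixteenth_pow]
  rw [tsum_mul_left, tsum_geometric_of_lt_one (by norm_num) (by norm_num)]
  ring

theorem sqrt_fifteen_mul_div_three_lt {t : ℝ} (ht : 0 < t) :
    Real.sqrt (15 * t) / 3 < Real.sqrt (3 * t) := by
  rw [Real.lt_sqrt (by positivity), div_pow, Real.sq_sqrt (by positivity)]
  linarith

/-- If `dist_H(√t₁ Σ, √t₂ Σ) ≤ C₀ √(t₁ - t₂)` for all `t₁ > t₂ > 0`, then every point
`√t x` with `x ∈ Σ` is within distance `C₀ √(3t)` of the limit cone `C` of `√t Σ` as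
`t → 0⁺`. -/
theorem point_close_to_cone (n k : ℕ) (S : Set (EuclideanSpace ℝ (Fin (n + k))))
    (C₀ : ℝ) (hC₀ : 0 < C₀)
    (hH : ∀ t₁ t₂ : ℝ, 0 < t₂ → t₂ < t₁ →
      EMetric.hausdorffEdist (Real.sqrt t₁ • S) (Real.sqrt t₂ • S)
        ≤ ENNReal.ofReal (C₀ * Real.sqrt (t₁ - t₂))) :
    let C : Set (EuclideanSpace ℝ (Fin (n + k))) :=
      {y | ∃ (t : ℕ → ℝ) (x : ℕ → EuclideanSpace ℝ (Fin (n + k))),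
        (∀ i, 0 < t i) ∧ Tendsto t atTop (nhds 0) ∧ (∀ i, x i ∈ S) ∧
        Tendsto (fun i => Real.sqrt (t i) • x i) atTop (nhds y)}
    ∀ x ∈ S, ∀ t : ℝ, 0 < t →
      ∃ y ∈ C, dist (Real.sqrt t • x) y ≤ C₀ * Real.sqrt (3 * t) := by
  intro C x hx t ht
  set τ : ℕ → ℝ := fun i => t * (1 / 16) ^ i
  have hτ_pos : ∀ i, 0 < τ i := fun i => by positivity
  have hτ_lt : ∀ i, τ (i + 1) < τ i := fun i => by
    simp only [τ, pow_succ]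
    nlinarith [mul_pos ht (pow_pos (show (0 : ℝ) < 1 / 16 by norm_num) i)]
  have hτ_lim : Tendsto τ atTop (𝓝 0) := by
    simpa only [mul_zero] using
      (tendsto_pow_atTop_nhds_zero_of_lt_one (by norm_num : (0 : ℝ) ≤ 1 / 16) (by norm_num)).const_mul t
  set d : ℕ → ℝ := fun i => C₀ * Real.sqrt (τ i - τ (i + 1))
  have hd_tsum : ∑' i, d i = C₀ * (Real.sqrt (15 * t) / 3) := by
    rw [tsum_mul_left, tsum_sqrt_sub_mul_sixteenth_pow]
  have hd : Summable d := by
    simp only [d, τ, sqrt_sub_mul_sixteenth_pow]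
    exact ((summable_geometric_of_lt_one (by norm_num) (by norm_num)).mul_left _).mul_left _
  have hp : Real.sqrt (τ 0) • x ∈ Real.sqrt (τ 0) • S := Set.smul_mem_smul_set hx
  obtain ⟨f, hf_mem, y, hy, hdist⟩ := exists_seq_mem_tendsto_dist_le_of_hausdorffEDist_le
    (fun i => by positivity) hd (fun i => hH _ _ (hτ_pos (i + 1)) (hτ_lt i)) hp
    (sub_pos.mpr (mul_lt_mul_of_pos_left (sqrt_fifteen_mul_div_three_lt ht) hC₀))
  choose xs hxs_mem hxs using fun i => Set.mem_smul_set.mp (hf_mem i)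
  refine ⟨y, ⟨τ, xs, hτ_pos, hτ_lim, hxs_mem, ?_⟩, ?_⟩
  · simpa only [hxs] using hy
  · simpa [τ, hd_tsum] using hdist
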